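/- arXiv:2009.14590 — 6 statements merged into one kernel-verified Lean document; each statement's English description precedes it below -/
import Mathlib

section
/- If T : ℕ → ℕ → ℝ satisfies T(n, p) ≤ T(n/2, p/4) + 36·(n/p) + 6·log₂ p for all n, p powers of two and four respectively with p ≥ 4 and n ≥ p, and T(m, 1) ≤ 8m² for all m, then T(n, p) ≤ 38·n²/p + 36·n/√p + 3·log₂²p for all such n, p with n ≥ p. -/
/-- COPSIM_MI computation time recurrence. -/
theorem stmt_4 (T : ℕ → ℕ → ℝ)
    (hrec : ∀ n p : ℕ, (∃ i, n = 2 ^ i) → (∃ j, p = 4 ^ j) → 4 ≤ p → p ≤ n →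
      T n p ≤ T (n / 2) (p / 4) + 36 * ((n : ℝ) / p) + 6 * Real.logb 2 p)
    (hbase : ∀ m : ℕ, T m 1 ≤ 8 * (m : ℝ) ^ 2) :
    ∀ n p : ℕ, (∃ i, n = 2 ^ i) → (∃ j, p = 4 ^ j) → 4 ≤ p → p ≤ n →
      T n p ≤ 38 * (n : ℝ) ^ 2 / p + 36 * n / Real.sqrt p + 3 * (Real.logb 2 p) ^ 2 := by
  have key : ∀ j : ℕ, ∀ n : ℕ, (∃ i, n = 2 ^ i) → 4 ^ j ≤ n →
      T n (4 ^ j) ≤ 8 * (n : ℝ) ^ 2 / 4 ^ j + 36 * ((n : ℝ) / 4 ^ j) * (2 ^ j - 1)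
        + 6 * j * (j + 1) := by
    intro j
    induction j with
    | zero => intro n _ _; simpa using hbase n
    | succ j ih =>
      rintro n ⟨i, hi⟩ hpn
      have h2 : (2:ℕ) ^ (2 * (j+1)) ≤ 2 ^ i := by
        calc (2:ℕ) ^ (2 * (j+1)) = 4 ^ (j+1) := by rw [pow_mul]; norm_num
        _ ≤ n := hpn
        _ = 2 ^ i := hi
      have hij : 2 * (j+1) ≤ i := (Nat.pow_le_pow_iff_right (by norm_num)).mp h2
      obtain ⟨k, rfl⟩ : ∃ k, i = k + 1 := ⟨i - 1, by omega⟩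
      have hn2 : n / 2 = 2 ^ k := by
        rw [hi, pow_succ]
        exact Nat.mul_div_cancel _ (by norm_num)
      have hp2 : 4 ^ j ≤ n / 2 := by
        rw [hn2]
        calc (4:ℕ) ^ j = 2 ^ (2*j) := by rw [pow_mul]; norm_num
        _ ≤ 2 ^ k := Nat.pow_le_pow_right (by norm_num) (by omega)
      have hdiv : (4:ℕ) ^ (j+1) / 4 = 4 ^ j := by
        rw [pow_succ]; exact Nat.mul_div_cancel _ (by norm_num)
      have hstep := hrec n (4 ^ (j+1)) ⟨k+1, hi⟩ ⟨j+1, rfl⟩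
        (by calc (4:ℕ) = 4 ^ 1 := (pow_one 4).symm
            _ ≤ 4 ^ (j+1) := Nat.pow_le_pow_right (by norm_num) (by omega)) hpn
      rw [hdiv] at hstep
      have hIH := ih (n / 2) ⟨k, hn2⟩ hp2
      have hlog : Real.logb 2 (((4 ^ (j+1) : ℕ)) : ℝ) = 2 * ((j:ℝ)+1) := by
        push_cast
        rw [show ((4:ℝ)) ^ (j+1) = 2 ^ (2 * (j+1)) by rw [pow_mul]; norm_num]
        rw [Real.logb_pow, Real.logb_self_eq_one (by norm_num)]
        push_cast; ring
      have hnc : (n : ℝ) = 2 * ((n / 2 : ℕ) : ℝ) := by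
        rw [hn2, hi, pow_succ]
        push_cast; ring
      have h4pos : (0:ℝ) < 4 ^ j := by positivity
      calc T n (4 ^ (j+1)) ≤ T (n/2) (4 ^ j) + 36 * ((n:ℝ) / ((4 ^ (j+1) : ℕ) : ℝ))
            + 6 * Real.logb 2 (((4 ^ (j+1) : ℕ)) : ℝ) := hstep
        _ ≤ (8 * ((n/2 : ℕ) : ℝ) ^ 2 / 4 ^ j + 36 * (((n/2:ℕ) : ℝ) / 4 ^ j) * (2 ^ j - 1)
              + 6 * j * (j + 1)) + 36 * ((n:ℝ) / ((4 ^ (j+1) : ℕ) : ℝ))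
            + 6 * Real.logb 2 (((4 ^ (j+1) : ℕ)) : ℝ) := by linarith [hIH]
        _ = 8 * (n : ℝ) ^ 2 / 4 ^ (j+1) + 36 * ((n : ℝ) / 4 ^ (j+1)) * (2 ^ (j+1) - 1)
              + 6 * ((j:ℝ)+1) * (((j:ℝ)+1) + 1) := by
            rw [hlog, hnc]
            push_cast
            field_simp
            ring
        _ = _ := by push_cast; ring
  rintro n p ⟨i, hi⟩ ⟨j, hj⟩ hp4 hpn
  subst hj
  have hj1 : 1 ≤ j := by
    by_contra h
    interval_cases j <;> omega
  have hb := key j n ⟨i, hi⟩ hpn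
  have hsqrt : Real.sqrt (((4 ^ j : ℕ)) : ℝ) = 2 ^ j := by
    push_cast
    rw [show ((4:ℝ)) ^ j = (2 ^ j) ^ 2 by rw [← pow_mul, mul_comm, pow_mul]; norm_num]
    exact Real.sqrt_sq (by positivity)
  have hlog : Real.logb 2 (((4 ^ j : ℕ)) : ℝ) = 2 * (j:ℝ) := by
    push_cast
    rw [show ((4:ℝ)) ^ j = 2 ^ (2 * j) by rw [pow_mul]; norm_num]
    rw [Real.logb_pow, Real.logb_self_eq_one (by norm_num)]
    push_cast; ring
  rw [hsqrt, hlog]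
  have h2pos : (0:ℝ) < (2:ℝ) ^ j := by positivity
  have hnn : (0:ℝ) ≤ (n:ℝ) := Nat.cast_nonneg n
  have h42 : ((4:ℝ)) ^ j = 2 ^ j * 2 ^ j := by
    rw [show ((4:ℝ)) = 2 * 2 by norm_num, mul_pow]
  have key2 : (n:ℝ) / (2 ^ j * 2 ^ j) * ((2:ℝ) ^ j - 1) ≤ (n:ℝ) / 2 ^ j := by
    rw [div_mul_eq_mul_div, div_le_div_iff₀ (by positivity) h2pos]
    nlinarith [mul_pos h2pos h2pos]
  have h36 : 36 * ((n : ℝ) / 4 ^ j) * ((2:ℝ) ^ j - 1) ≤ 36 * (n:ℝ) / 2 ^ j := by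
    rw [h42]
    calc 36 * ((n:ℝ) / (2 ^ j * 2 ^ j)) * ((2:ℝ) ^ j - 1)
        = 36 * ((n:ℝ) / (2 ^ j * 2 ^ j) * ((2:ℝ) ^ j - 1)) := by ring
      _ ≤ 36 * ((n:ℝ) / 2 ^ j) := by linarith [key2]
      _ = 36 * (n:ℝ) / 2 ^ j := by ring
  have hlsq : 6 * (j:ℝ) * ((j:ℝ) + 1) ≤ 3 * (2 * (j:ℝ)) ^ 2 := by
    have : (1:ℝ) ≤ j := by exact_mod_cast hj1
    nlinarith
  have h8 : 8 * (n:ℝ) ^ 2 / 4 ^ j ≤ 38 * (n:ℝ) ^ 2 / 4 ^ j := by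
    gcongr <;> norm_num
  push_cast
  linarith
end

section
/- If B : ℕ → ℕ → ℝ satisfies B(n, p) ≤ B(n/2, p/4) + 14·(n/p) + 12·log₂ p for all n a power of two and p a power of four with 4 ≤ p ≤ n, and B(m, 1) = 0 for all m, then B(n, p) ≤ 14·n/√p + 6·log₂²p. -/
lemma logb_two_four_pow (j : ℕ) : Real.logb 2 (((4:ℕ)^j : ℕ) : ℝ) = 2 * j := by
  push_cast
  rw [show (4:ℝ) = 2^2 by norm_num, ← pow_mul, Real.logb_pow,
    Real.logb_self_eq_one (by norm_num : (1:ℝ) < 2)]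
  push_cast; ring

lemma stmt_5_aux (B : ℕ → ℕ → ℝ)
    (hrec : ∀ n p : ℕ, (∃ i, n = 2 ^ i) → (∃ j, p = 4 ^ j) → 4 ≤ p → p ≤ n →
      B n p ≤ B (n / 2) (p / 4) + 14 * ((n : ℝ) / p) + 12 * Real.logb 2 p)
    (hbase : ∀ m : ℕ, B m 1 = 0) :
    ∀ j : ℕ, 1 ≤ j → ∀ i : ℕ, 2 * j ≤ i →
      B (2 ^ i) (4 ^ j) ≤ 14 * (2:ℝ)^i * ((2:ℝ)^j - 1) / (4:ℝ)^j + 12 * j * (j + 1) := by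
  intro j hj
  induction j, hj using Nat.le_induction with
  | base =>
    intro i hi
    obtain ⟨k, rfl⟩ : ∃ k, i = k + 1 := ⟨i - 1, by omega⟩
    have h := hrec (2 ^ (k+1)) 4 ⟨k+1, rfl⟩ ⟨1, rfl⟩ le_rfl
      (by calc (4:ℕ) = 2^2 := by norm_num
            _ ≤ 2^(k+1) := Nat.pow_le_pow_right (by norm_num) (by omega))
    rw [show (2:ℕ)^(k+1)/2 = 2^k by omega, show (4:ℕ)/4 = 1 by norm_num, hbase,
      show ((4:ℕ):ℝ) = ((4:ℕ)^1 : ℕ) by norm_num, logb_two_four_pow] at h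
    refine h.trans (le_of_eq ?_)
    push_cast
    ring
  | succ j hj ih =>
    intro i hi
    obtain ⟨k, rfl⟩ : ∃ k, i = k + 1 := ⟨i - 1, by omega⟩
    have hple : (4:ℕ)^(j+1) ≤ 2^(k+1) := by
      calc (4:ℕ)^(j+1) = 2^(2*(j+1)) := by rw [show (4:ℕ) = 2^2 by norm_num, ← pow_mul]
        _ ≤ 2^(k+1) := Nat.pow_le_pow_right (by norm_num) hi
    have h := hrec (2 ^ (k+1)) (4 ^ (j+1)) ⟨k+1, rfl⟩ ⟨j+1, rfl⟩
      (by calc (4:ℕ) = 4^1 := by norm_num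
            _ ≤ 4^(j+1) := Nat.pow_le_pow_right (by norm_num) (by omega)) hple
    rw [show (2:ℕ)^(k+1)/2 = 2^k by omega,
      show (4:ℕ)^(j+1)/4 = 4^j by rw [pow_succ]; omega, logb_two_four_pow] at h
    have ihk := ih k (by omega)
    have h4 : (0:ℝ) < (4:ℝ)^j := by positivity
    refine h.trans ?_
    push_cast
    have expand : (14:ℝ) * 2^(k+1) * (2^(j+1) - 1) / 4^(j+1) + 12 * ((j:ℝ)+1) * (((j:ℝ)+1)+1)
        = (14 * (2:ℝ)^k * ((2:ℝ)^j - 1) / (4:ℝ)^j + 12 * j * (j + 1))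
          + 14 * (2:ℝ)^(k+1) / (4:ℝ)^(j+1) + 12 * (2 * ((j:ℝ)+1)) := by
      field_simp
      ring
    rw [expand, mul_div_assoc (14:ℝ) ((2:ℝ)^(k+1)) ((4:ℝ)^(j+1))]
    linarith [ihk]

/-- COPSIM_MI bandwidth recurrence. -/
theorem stmt_5 (B : ℕ → ℕ → ℝ)
    (hrec : ∀ n p : ℕ, (∃ i, n = 2 ^ i) → (∃ j, p = 4 ^ j) → 4 ≤ p → p ≤ n →
      B n p ≤ B (n / 2) (p / 4) + 14 * ((n : ℝ) / p) + 12 * Real.logb 2 p)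
    (hbase : ∀ m : ℕ, B m 1 = 0) :
    ∀ n p : ℕ, (∃ i, n = 2 ^ i) → (∃ j, p = 4 ^ j) → 4 ≤ p → p ≤ n →
      B n p ≤ 14 * (n : ℝ) / Real.sqrt p + 6 * (Real.logb 2 p) ^ 2 := by
  rintro n p ⟨i, rfl⟩ ⟨j, rfl⟩ hp hpn
  have hj : 1 ≤ j := by
    by_contra h
    interval_cases j <;> omega
  have hij : 2 * j ≤ i := by
    have : (2:ℕ)^(2*j) ≤ 2^i := by
      calc (2:ℕ)^(2*j) = 4^j := by rw [show (4:ℕ) = 2^2 by norm_num, ← pow_mul]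
        _ ≤ 2^i := hpn
    exact (Nat.pow_le_pow_iff_right (by norm_num)).mp this
  have key := stmt_5_aux B hrec hbase j hj i hij
  have hsqrt : Real.sqrt (((4:ℕ)^j : ℕ) : ℝ) = (2:ℝ)^j := by
    push_cast
    rw [show (4:ℝ)^j = ((2:ℝ)^j)^2 by rw [show (4:ℝ) = 2^2 by norm_num, ← pow_mul, mul_comm 2 j, pow_mul]]
    exact Real.sqrt_sq (by positivity)
  rw [hsqrt, logb_two_four_pow]
  have h2j : (0:ℝ) < (2:ℝ)^j := by positivity
  have h4j : (4:ℝ)^j = ((2:ℝ)^j)^2 := by rw [show (4:ℝ) = 2^2 by norm_num, ← pow_mul, mul_comm 2 j, pow_mul]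
  refine key.trans ?_
  push_cast
  have h1 : 14 * (2:ℝ)^i * ((2:ℝ)^j - 1) / (4:ℝ)^j ≤ 14 * (2:ℝ)^i / (2:ℝ)^j := by
    rw [h4j]
    rw [div_le_div_iff₀ (by positivity) h2j]
    have : (0:ℝ) ≤ (2:ℝ)^i := by positivity
    nlinarith
  have h2 : 12 * (j:ℝ) * (j + 1) ≤ 6 * (2 * j)^2 := by
    have : (1:ℝ) ≤ j := by exact_mod_cast hj
    nlinarith
  linarith
end

section
/- Let T : ℕ → ℝ satisfy T(n) ≤ 4·T(n/2) + 6n/p + 12·log₂ p for all powers of two n with n > n₀, where p ≥ 2 and n₀ ≥ 1 are fixed, and suppose T(n₀) ≤ 38·n₀²/p + 3·log₂²p. If additionally n ≥ p and log₂²p ≤ n₀²/p, then T(n) ≤ C·n²/p for some absolute constant C ≤ 196, for all powers of two n ≥ n₀ with n/n₀ a power of two. -/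
/-- COPSIM main-mode computation time. -/
theorem stmt_7 (T : ℕ → ℝ) (p n₀ : ℕ) (hp : 2 ≤ p) (hn₀ : 1 ≤ n₀)
    (hrec : ∀ n : ℕ, (∃ k, n = 2 ^ k) → n₀ < n →
      T n ≤ 4 * T (n / 2) + 6 * (n : ℝ) / p + 12 * Real.logb 2 p)
    (hbase : T n₀ ≤ 38 * (n₀ : ℝ) ^ 2 / p + 3 * (Real.logb 2 p) ^ 2)
    (hlog : (Real.logb 2 p) ^ 2 ≤ (n₀ : ℝ) ^ 2 / p) :
    ∃ C : ℝ, C ≤ 196 ∧ ∀ n : ℕ, (∃ k, n = 2 ^ k) → n₀ ≤ n → (∃ k, n = n₀ * 2 ^ k) →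
      p ≤ n → T n ≤ C * (n : ℝ) ^ 2 / p := by
  obtain ⟨L, hLdef⟩ : ∃ L : ℝ, L = Real.logb 2 p := ⟨_, rfl⟩
  rw [← hLdef] at hbase hlog
  simp only [← hLdef] at hrec
  have hp0 : (0:ℝ) < p := by positivity
  have hpR : (2:ℝ) ≤ (p:ℝ) := by exact_mod_cast hp
  have hn₀R : (1:ℝ) ≤ (n₀:ℝ) := by exact_mod_cast hn₀
  have hL1 : (1:ℝ) ≤ L := by
    rw [hLdef]
    calc (1:ℝ) = Real.logb 2 2 := (Real.logb_self_eq_one (by norm_num)).symm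
    _ ≤ Real.logb 2 p := Real.logb_le_logb_of_le (by norm_num) (by norm_num) hpR
  have hLL : L ≤ L ^ 2 := by nlinarith
  -- key invariant proved by induction on k
  have key : ∀ k : ℕ, (∃ m, n₀ * 2 ^ k = 2 ^ m) →
      T (n₀ * 2 ^ k) ≤ 196 * (((n₀ * 2 ^ k : ℕ) : ℝ) ^ 2 / p)
        - 6 * (((n₀ * 2 ^ k : ℕ) : ℝ) / p) - 4 * L := by
    intro k
    induction k with
    | zero =>
      intro _
      simp only [pow_zero, mul_one]
      have hbase' : T n₀ ≤ 38 * ((n₀:ℝ) ^ 2 / p) + 3 * L ^ 2 := by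
        rw [← mul_div_assoc]; exact hbase
      have h2 : (n₀:ℝ) / p ≤ (n₀:ℝ)^2 / p := by
        gcongr
        nlinarith
      have h3 : (0:ℝ) ≤ (n₀:ℝ)^2 / p := by positivity
      have h4 : 4 * L ≤ 4 * ((n₀:ℝ)^2 / p) := by nlinarith
      have h5 : 3 * L^2 ≤ 3 * ((n₀:ℝ)^2 / p) := by linarith
      linarith
    | succ k ih =>
      intro ⟨m, hm⟩
      have hm1 : 1 ≤ m := by
        by_contra h
        interval_cases m
        · have : n₀ * 2 ^ (k+1) = 1 := hm
          have h2 : 2 ∣ n₀ * 2 ^ (k+1) := ⟨n₀ * 2 ^ k, by ring⟩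
          omega
      have hhalf : n₀ * 2 ^ k = 2 ^ (m - 1) := by
        have h2m : 2 ^ m = 2 * 2 ^ (m - 1) := by
          rw [← pow_succ']
          congr 1
          omega
        have key2 : 2 * (n₀ * 2 ^ k) = 2 * 2 ^ (m - 1) := by
          rw [← h2m, ← hm]; ring
        exact Nat.eq_of_mul_eq_mul_left (by norm_num) key2
      have ihh := ih ⟨m - 1, hhalf⟩
      have hlt : n₀ < n₀ * 2 ^ (k+1) := by
        calc n₀ < n₀ * 2 := by omega
        _ ≤ n₀ * 2 ^ (k+1) := Nat.mul_le_mul_left _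
              (by simpa using Nat.pow_le_pow_right (by norm_num) (Nat.succ_le_succ (Nat.zero_le k)))
      have hdiv : n₀ * 2 ^ (k+1) / 2 = n₀ * 2 ^ k := by
        rw [pow_succ, ← mul_assoc]
        exact Nat.mul_div_cancel _ (by norm_num)
      have hr := hrec (n₀ * 2 ^ (k+1)) ⟨m, hm⟩ hlt
      rw [hdiv] at hr
      have hcast : ((n₀ * 2 ^ (k+1) : ℕ) : ℝ) = 2 * ((n₀ * 2 ^ k : ℕ) : ℝ) := by
        push_cast; ring
      rw [hcast] at hr ⊢
      calc T (n₀ * 2 ^ (k+1))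
          ≤ 4 * T (n₀ * 2 ^ k) + 6 * (2 * ((n₀ * 2 ^ k : ℕ) : ℝ)) / p + 12 * L := hr
      _ ≤ 4 * (196 * (((n₀ * 2 ^ k : ℕ) : ℝ) ^ 2 / p) - 6 * (((n₀ * 2 ^ k : ℕ) : ℝ) / p) - 4 * L)
            + 6 * (2 * ((n₀ * 2 ^ k : ℕ) : ℝ)) / p + 12 * L := by linarith
      _ = 196 * ((2 * ((n₀ * 2 ^ k : ℕ) : ℝ)) ^ 2 / p)
            - 6 * (2 * ((n₀ * 2 ^ k : ℕ) : ℝ) / p) - 4 * L := by ring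
  refine ⟨196, le_refl _, ?_⟩
  rintro n ⟨a, ha⟩ _ ⟨k, hk⟩ _
  subst hk
  have h := key k ⟨a, ha⟩
  have h1 : (0:ℝ) ≤ ((n₀ * 2 ^ k : ℕ) : ℝ) / p := by positivity
  have h2 : (0:ℝ) ≤ 4 * L := by linarith
  rw [mul_div_assoc]
  linarith
end

section
/- If T : ℕ → ℕ → ℝ satisfies T(n, p) ≤ T(n/2, p/3) + 57·n/p + 22·log₂ p for all n a power of two and p of the form 4·3^k with p > 4 and n ≥ p, and T(m, 4) ≤ 12·m^{log₂ 3} for all m ≥ 4, then T(n, p) ≤ 173·n^{log₂ 3}/p for all such n, p with n ≥ p. -/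
open Real

private lemma rpow_pow_eq (b : ℝ) (hb : 0 ≤ b) (q : ℝ) (n : ℕ) :
    (b ^ q) ^ (n:ℕ) = b ^ (q * n) := by
  rw [← Real.rpow_natCast (b ^ q) n, ← Real.rpow_mul hb]

private lemma alpha_lo : (19:ℝ)/12 ≤ Real.logb 2 3 := by
  rw [Real.le_logb_iff_rpow_le (by norm_num) (by norm_num)]
  have h : ((2:ℝ) ^ ((19:ℝ)/12)) ^ (12:ℕ) ≤ (3:ℝ) ^ (12:ℕ) := by
    rw [rpow_pow_eq _ (by norm_num)]
    norm_num
  exact le_of_pow_le_pow_left₀ (by norm_num) (by norm_num) h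

private lemma alpha_hi : Real.logb 2 3 ≤ (8:ℝ)/5 := by
  rw [Real.logb_le_iff_le_rpow (by norm_num) (by norm_num)]
  have h : ((3:ℝ)) ^ (5:ℕ) ≤ ((2:ℝ) ^ ((8:ℝ)/5)) ^ (5:ℕ) := by
    rw [rpow_pow_eq _ (by norm_num)]
    norm_num
  exact le_of_pow_le_pow_left₀ (by norm_num) (by positivity) h

private lemma beta_lo : (1.89:ℝ) ≤ (3:ℝ) ^ (Real.logb 2 3 - 1) := by
  have h1 : (3:ℝ) ^ ((7:ℝ)/12) ≤ (3:ℝ) ^ (Real.logb 2 3 - 1) := by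
    apply Real.rpow_le_rpow_of_exponent_le (by norm_num)
    have := alpha_lo; linarith
  refine le_trans ?_ h1
  have h : ((1.89:ℝ)) ^ (12:ℕ) ≤ ((3:ℝ) ^ ((7:ℝ)/12)) ^ (12:ℕ) := by
    rw [rpow_pow_eq _ (by norm_num)]
    norm_num
  exact le_of_pow_le_pow_left₀ (by norm_num) (by positivity) h

private lemma beta_hi : (3:ℝ) ^ (Real.logb 2 3 - 1) ≤ (1.94:ℝ) := by
  have h1 : (3:ℝ) ^ (Real.logb 2 3 - 1) ≤ (3:ℝ) ^ ((3:ℝ)/5) := by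
    apply Real.rpow_le_rpow_of_exponent_le (by norm_num)
    have := alpha_hi; linarith
  refine h1.trans ?_
  have h : ((3:ℝ) ^ ((3:ℝ)/5)) ^ (5:ℕ) ≤ ((1.94:ℝ)) ^ (5:ℕ) := by
    rw [rpow_pow_eq _ (by norm_num)]
    norm_num
  exact le_of_pow_le_pow_left₀ (by norm_num) (by norm_num) h

private lemma two_rpow_alpha : (2:ℝ) ^ (Real.logb 2 3) = 3 :=
  Real.rpow_logb (by norm_num) (by norm_num) (by norm_num)

private lemma four_rpow_alpha : (4:ℝ) ^ (Real.logb 2 3) = 9 := by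
  have h4 : (4:ℝ) = (2:ℝ) ^ (2:ℕ) := by norm_num
  rw [h4, ← Real.rpow_natCast (2:ℝ) 2, ← Real.rpow_mul (by norm_num), mul_comm,
      Real.rpow_mul (by norm_num), two_rpow_alpha]
  norm_num

private lemma logb2_two_pow (n : ℕ) : Real.logb 2 ((2:ℝ) ^ (n:ℕ)) = n := by
  rw [Real.logb_pow, Real.logb_self_eq_one (by norm_num), mul_one]

set_option maxHeartbeats 1000000 in
/-- Strengthened induction. -/
private lemma key_aux (T : ℕ → ℕ → ℝ)
    (hrec : ∀ n p : ℕ, (∃ i, n = 2 ^ i) → (∃ k, p = 4 * 3 ^ k) → 4 < p → p ≤ n →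
      T n p ≤ T (n / 2) (p / 3) + 57 * (n : ℝ) / p + 22 * Real.logb 2 p)
    (hbase : ∀ m : ℕ, 4 ≤ m → T m 4 ≤ 12 * (m : ℝ) ^ (Real.logb 2 3)) :
    ∀ k n : ℕ, (∃ i, n = 2 ^ i) → 4 * 3 ^ k ≤ n →
      T n (4 * 3 ^ k) ≤ 173 * (n:ℝ) ^ (Real.logb 2 3) / ((4 * 3 ^ k : ℕ) : ℝ)
        - (160 + 25 * Real.logb 2 ((4 * 3 ^ k : ℕ) : ℝ)) * (n:ℝ) ^ (Real.logb 2 3)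
          / ((4 * 3 ^ k : ℕ) : ℝ) ^ (Real.logb 2 3) := by
  intro k
  induction k with
  | zero =>
    intro n hn hle
    simp only [pow_zero, mul_one] at hle ⊢
    have h4 : ((4:ℕ):ℝ) = (4:ℝ) := by norm_num
    rw [h4, four_rpow_alpha]
    have hlog4 : Real.logb 2 (4:ℝ) = 2 := by
      have := logb2_two_pow 2; norm_num at this; exact this
    rw [hlog4]
    have hb := hbase n hle
    have hpos : (0:ℝ) ≤ (n:ℝ) ^ (Real.logb 2 3) := Real.rpow_nonneg (by positivity) _
    nlinarith [hb, hpos]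
  | succ k ih =>
    intro n hn hle
    obtain ⟨i, rfl⟩ := hn
    set α := Real.logb 2 3 with hαdef
    have h2α : (2:ℝ) ^ α = 3 := two_rpow_alpha
    have hqp : 4 * 3 ^ (k+1) = 3 * (4 * 3 ^ k) := by ring
    have h3k : 3 ≤ 3 ^ (k+1) := by
      calc 3 = 3 ^ 1 := rfl
      _ ≤ 3 ^ (k+1) := Nat.pow_le_pow_right (by norm_num) (by omega)
    have h12 : 12 ≤ 4 * 3 ^ (k+1) := by omega
    have hbig : 12 ≤ 2 ^ i := le_trans h12 hle
    have hi1 : 1 ≤ i := by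
      rcases Nat.eq_zero_or_pos i with h | h
      · subst h; norm_num at hbig
      · exact h
    have h2i : 2 ^ i = 2 * 2 ^ (i-1) := by
      conv_lhs => rw [show i = (i-1)+1 by omega]
      rw [pow_succ]; ring
    have hndiv : 2 ^ i / 2 = 2 ^ (i - 1) := by omega
    have hpdiv : (4 * 3 ^ (k+1)) / 3 = 4 * 3 ^ k := by
      rw [hqp]; exact Nat.mul_div_cancel_left _ (by norm_num)
    have hqle : 4 * 3 ^ k ≤ 2 ^ (i - 1) := by omega
    have hr := hrec (2 ^ i) (4 * 3 ^ (k+1)) ⟨i, rfl⟩ ⟨k+1, rfl⟩ (by omega) hle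
    rw [hndiv, hpdiv] at hr
    have hIH := ih (2 ^ (i-1)) ⟨i-1, rfl⟩ hqle
    -- real notation
    set N : ℝ := ((2 ^ i : ℕ) : ℝ) with hN
    set M : ℝ := ((2 ^ (i-1) : ℕ) : ℝ) with hM
    set P : ℝ := ((4 * 3 ^ (k+1) : ℕ) : ℝ) with hP
    set Q : ℝ := ((4 * 3 ^ k : ℕ) : ℝ) with hQ
    have hQpos : (0:ℝ) < Q := by rw [hQ]; positivity
    have hMpos : (0:ℝ) < M := by rw [hM]; positivity
    have hNpos : (0:ℝ) < N := by rw [hN]; positivity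
    have hP3Q : P = 3 * Q := by rw [hP, hQ]; push_cast [hqp]; ring
    have hPpos : (0:ℝ) < P := by linarith
    have hN2M : N = 2 * M := by rw [hN, hM, h2i]; push_cast; ring
    -- rpow identities
    have hMα : M ^ α = N ^ α / 3 := by
      rw [hN2M, Real.mul_rpow (by norm_num) (le_of_lt hMpos), h2α]
      field_simp
    have h3αpos : (0:ℝ) < (3:ℝ) ^ α := Real.rpow_pos_of_pos (by norm_num) _
    have hQα : Q ^ α = P ^ α / 3 ^ α := by
      rw [hP3Q, Real.mul_rpow (by norm_num) (le_of_lt hQpos)]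
      field_simp
    set β : ℝ := (3:ℝ) ^ (α - 1) with hβ
    have h3β : (3:ℝ) ^ α = 3 * β := by
      rw [hβ, show α = 1 + (α - 1) by ring, Real.rpow_add (by norm_num), Real.rpow_one]
      ring_nf
    have hβlo : (1.89:ℝ) ≤ β := beta_lo
    have hβhi : β ≤ (1.94:ℝ) := beta_hi
    have hαlo : (19:ℝ)/12 ≤ α := alpha_lo
    have hαhi : α ≤ (8:ℝ)/5 := alpha_hi
    set L : ℝ := Real.logb 2 P with hL
    have hlogQ : Real.logb 2 Q = L - α := by
      rw [hL, hP3Q, Real.logb_mul (by norm_num) (ne_of_gt hQpos), ← hαdef]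
      ring
    have hLlo : (3:ℝ) ≤ L := by
      have h8 : Real.logb 2 ((2:ℝ)^(3:ℕ)) = 3 := by
        have := logb2_two_pow 3; norm_num at this ⊢; exact this
      have h12P : ((2:ℝ)^(3:ℕ)) ≤ P := by
        have h12' : (12:ℝ) ≤ P := by rw [hP]; exact_mod_cast h12
        have h8 : ((2:ℝ)^(3:ℕ)) = 8 := by norm_num
        linarith [h8.le]
      calc (3:ℝ) = Real.logb 2 ((2:ℝ)^(3:ℕ)) := h8.symm
      _ ≤ Real.logb 2 P := Real.logb_le_logb_of_le (by norm_num) (by positivity) h12P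
    -- ratio facts
    set X : ℝ := N ^ α / P ^ α with hX
    have hNP : P ≤ N := by rw [hN, hP]; exact_mod_cast hle
    have hXR : X = (N / P) ^ α := by
      rw [hX, Real.div_rpow (le_of_lt hNpos) (le_of_lt hPpos)]
    have hR1 : (1:ℝ) ≤ N / P := (one_le_div hPpos).mpr hNP
    have hX1 : (1:ℝ) ≤ X := by
      rw [hXR]; exact Real.one_le_rpow hR1 (by linarith)
    have hXge : N / P ≤ X := by
      rw [hXR]
      calc N / P = (N/P) ^ (1:ℝ) := (Real.rpow_one _).symm
      _ ≤ (N/P) ^ α := Real.rpow_le_rpow_of_exponent_le hR1 (by linarith)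
    -- rewrite IH
    have hPαpos : (0:ℝ) < P ^ α := Real.rpow_pos_of_pos hPpos _
    have hβpos : (0:ℝ) < β := Real.rpow_pos_of_pos (by norm_num) _
    have e2 : 173 * M ^ α / Q = 173 * N ^ α / P := by
      rw [mul_div_assoc, mul_div_assoc, hMα, hP3Q, div_div]
    have e0 : M ^ α / Q ^ α = β * X := by
      rw [hMα, hQα, h3β, hX, div_div_eq_mul_div]
      ring
    have e3 : (160 + 25 * Real.logb 2 Q) * M ^ α / Q ^ α
        = (160 + 25 * (L - α)) * (β * X) := by
      rw [hlogQ, mul_div_assoc, e0]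
    rw [e2, e3] at hIH
    -- key coefficient inequality
    have hβ0 : (0:ℝ) ≤ β := by linarith
    clear_value α N M P Q β L X
    have p1 : (0:ℝ) ≤ (β - 1.89) * (L - 3) := mul_nonneg (by linarith) (by linarith)
    have p2 : (0:ℝ) ≤ (8/5 - α) * β := mul_nonneg (by linarith) hβ0
    have hC : 57 + 22 * L ≤ (160 + 25 * (L - α)) * β - (160 + 25 * L) := by
      linarith only [p1, p2, hβlo, hβhi, hLlo]
    have q1 : (0:ℝ) ≤ ((160 + 25 * (L - α)) * β - (160 + 25 * L) - (57 + 22 * L)) * X :=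
      mul_nonneg (by linarith) (by linarith)
    have q2 : (0:ℝ) ≤ (22 * L) * (X - 1) :=
      mul_nonneg (by linarith) (by linarith)
    have hcoef : 57 * (N / P) + 22 * L ≤
        (160 + 25 * (L - α)) * (β * X) - (160 + 25 * L) * X := by
      linarith only [q1, q2, hXge]
    have e1 : (160 + 25 * L) * N ^ α / P ^ α = (160 + 25 * L) * X := by
      rw [hX]; ring
    have e4 : 57 * N / P = 57 * (N / P) := by ring
    calc T (2^i) (4 * 3^(k+1)) ≤ T (2^(i-1)) (4*3^k) + 57 * N / P + 22 * L := hr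
    _ ≤ (173 * N ^ α / P - (160 + 25 * (L - α)) * (β * X)) + 57 * (N / P) + 22 * L := by
          rw [← e4]; linarith [hIH]
    _ ≤ 173 * N ^ α / P - (160 + 25 * L) * X := by linarith [hcoef]
    _ = 173 * N ^ α / P - (160 + 25 * L) * N ^ α / P ^ α := by rw [e1]

/-- COPK_MI computation time recurrence. -/
theorem stmt_10 (T : ℕ → ℕ → ℝ)
    (hrec : ∀ n p : ℕ, (∃ i, n = 2 ^ i) → (∃ k, p = 4 * 3 ^ k) → 4 < p → p ≤ n →
      T n p ≤ T (n / 2) (p / 3) + 57 * (n : ℝ) / p + 22 * Real.logb 2 p)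
    (hbase : ∀ m : ℕ, 4 ≤ m → T m 4 ≤ 12 * (m : ℝ) ^ (Real.logb 2 3)) :
    ∀ n p : ℕ, (∃ i, n = 2 ^ i) → (∃ k, p = 4 * 3 ^ k) → p ≤ n →
      T n p ≤ 173 * (n : ℝ) ^ (Real.logb 2 3) / p := by
  intro n p hn hp hle
  obtain ⟨k, rfl⟩ := hp
  have h := key_aux T hrec hbase k n hn hle
  have hQpos : (0:ℝ) < ((4 * 3 ^ k : ℕ) : ℝ) := by positivity
  have h1 : 1 ≤ 3 ^ k := Nat.one_le_pow _ _ (by norm_num)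
  have hL : (0:ℝ) ≤ Real.logb 2 ((4 * 3 ^ k : ℕ) : ℝ) := by
    apply Real.logb_nonneg (by norm_num)
    have h4 : (4:ℕ) ≤ 4 * 3 ^ k := by omega
    have : (4:ℝ) ≤ ((4 * 3 ^ k : ℕ) : ℝ) := by exact_mod_cast h4
    linarith
  have hnn : (0:ℝ) ≤ (160 + 25 * Real.logb 2 ((4 * 3 ^ k : ℕ) : ℝ))
      * (n:ℝ) ^ (Real.logb 2 3) / ((4 * 3 ^ k : ℕ) : ℝ) ^ (Real.logb 2 3) := by
    apply div_nonneg
    · exact mul_nonneg (by linarith) (Real.rpow_nonneg (by positivity) _)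
    · exact Real.rpow_nonneg (le_of_lt hQpos) _
  linarith
end

section
/- If B : ℕ → ℕ → ℝ satisfies B(n, p) ≤ B(n/2, p/3) + 20·n/p + 22·log₂ p for all n a power of two and p = 4·3^k with p > 4 and n ≥ p, and B(m, 4) ≤ 10m for all m ≥ 4, then B(n, p) ≤ 174·n/p^{log₃ 2} for all such n, p with n ≥ p ≥ 2. -/
/-- COPK_MI bandwidth recurrence. -/
theorem stmt_12 (B : ℕ → ℕ → ℝ)
    (hrec : ∀ n p : ℕ, (∃ i, n = 2 ^ i) → (∃ k, p = 4 * 3 ^ k) → 4 < p → p ≤ n →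
      B n p ≤ B (n / 2) (p / 3) + 20 * (n : ℝ) / p + 22 * Real.logb 2 p)
    (hbase : ∀ m : ℕ, 4 ≤ m → B m 4 ≤ 10 * (m : ℝ)) :
    ∀ n p : ℕ, (∃ i, n = 2 ^ i) → (∃ k, p = 4 * 3 ^ k) → 2 ≤ p → p ≤ n →
      B n p ≤ 174 * (n : ℝ) / (p : ℝ) ^ (Real.logb 3 2) := by
  have hlog2 : (0:ℝ) < Real.log 2 := Real.log_pos (by norm_num)
  have hlog3 : (0:ℝ) < Real.log 3 := Real.log_pos (by norm_num)
  -- upper bound on logb 2 3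
  have hc' : Real.logb 2 3 ≤ 8/5 := by
    rw [Real.logb, div_le_iff₀ hlog2]
    have h := Real.log_le_log (by norm_num : (0:ℝ) < 3^5)
      (by norm_num : (3:ℝ)^5 ≤ 2^8)
    rw [Real.log_pow, Real.log_pow] at h
    push_cast at h
    linarith
  -- upper bound on logb 3 2
  have hL' : Real.logb 3 2 ≤ 19/30 := by
    rw [Real.logb, div_le_iff₀ hlog3]
    have h := Real.log_le_log (by norm_num : (0:ℝ) < 2^30)
      (by norm_num : (2:ℝ)^30 ≤ 3^19)
    rw [Real.log_pow, Real.log_pow] at h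
    push_cast at h
    linarith
  have hA0 : (0:ℝ) < (4:ℝ) ^ Real.logb 3 2 := Real.rpow_pos_of_pos (by norm_num) _
  have hA : (4:ℝ) ^ Real.logb 3 2 ≤ 241/100 := by
    have h1 : (4:ℝ) ^ Real.logb 3 2 ≤ (4:ℝ) ^ ((19:ℝ)/30) :=
      Real.rpow_le_rpow_of_exponent_le (by norm_num) hL'
    have h30 : ((4:ℝ) ^ ((19:ℝ)/30)) ^ (30:ℕ) = (4:ℝ) ^ (19:ℕ) := by
      rw [← Real.rpow_natCast ((4:ℝ) ^ ((19:ℝ)/30)) 30, ← Real.rpow_mul (by norm_num)]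
      rw [show ((19:ℝ)/30) * ((30:ℕ):ℝ) = ((19:ℕ):ℝ) by push_cast; ring,
        Real.rpow_natCast]
    have h2 : (4:ℝ) ^ ((19:ℝ)/30) ≤ 241/100 := by
      apply le_of_pow_le_pow_left₀ (n := 30) (by norm_num) (by norm_num)
      rw [h30]; norm_num
    linarith
  have hrpow : ∀ k : ℕ, ((4:ℝ) * 3^k) ^ Real.logb 3 2
      = (4:ℝ) ^ Real.logb 3 2 * 2^k := by
    intro k
    rw [Real.mul_rpow (by norm_num) (by positivity)]
    congr 1
    rw [← Real.rpow_natCast 3 k, ← Real.rpow_mul (by norm_num), mul_comm,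
      Real.rpow_mul (by norm_num),
      Real.rpow_logb (by norm_num) (by norm_num) (by norm_num),
      Real.rpow_natCast]
  have hlog22 : Real.logb 2 2 = 1 := by rw [Real.logb_self_eq_one] <;> norm_num
  have hlogb : ∀ k : ℕ, Real.logb 2 ((4:ℝ) * 3^k) = 2 + k * Real.logb 2 3 := by
    intro k
    rw [Real.logb_mul (by norm_num) (by positivity), Real.logb_pow,
      show (4:ℝ) = 2^(2:ℕ) by norm_num, Real.logb_pow, hlog22]
    push_cast; ring
  -- geometric domination of the quadratic
  have hgeom : ∀ k : ℕ, (88/5)*(k:ℝ)^2 + (352/5)*(k:ℝ) + 176 ≤ 188*((3:ℝ)/2)^k := by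
    intro k
    induction k with
    | zero => norm_num
    | succ k ih =>
      have h32 : ((3:ℝ)/2)^(k+1) = (3/2) * (3/2)^k := by ring
      push_cast
      rw [h32]
      nlinarith [ih, sq_nonneg (k:ℝ)]
  -- main recurrence bound by induction on k
  have key1 : ∀ k i : ℕ, 4 * 3^k ≤ 2^i →
      B (2^i) (4*3^k) ≤ 25 * (2:ℝ)^i / (2:ℝ)^k - 60 * (2:ℝ)^i / (4*(3:ℝ)^k)
        + 22 * (2*(k:ℝ) + Real.logb 2 3 * ((k:ℝ) * ((k:ℝ)+1)) / 2) := by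
    intro k
    induction k with
    | zero =>
      intro i hpn
      have hb := hbase (2^i) (by simpa using hpn)
      push_cast at hb
      norm_num
      linarith
    | succ k ih =>
      intro i hpn
      obtain _ | i := i
      · exfalso
        have h1 : (1:ℕ) ≤ 3^(k+1) := Nat.one_le_pow _ _ (by norm_num)
        simp only [pow_zero] at hpn
        linarith
      have h3 : 4 * 3^k ≤ 2^i := by
        rw [pow_succ, pow_succ] at hpn
        linarith [Nat.zero_le (3^k)]
      have hIH := ih i h3
      have hrec' := hrec (2^(i+1)) (4*3^(k+1)) ⟨i+1, rfl⟩ ⟨k+1, rfl⟩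
        (by
          have h : (3:ℕ) ≤ 3^(k+1) := Nat.le_self_pow (Nat.succ_ne_zero k) 3
          linarith) hpn
      have e1 : 2^(i+1)/2 = 2^i := by
        rw [pow_succ]; exact Nat.mul_div_cancel _ (by norm_num)
      have e2 : 4*3^(k+1)/3 = 4*3^k := by
        rw [pow_succ, ← mul_assoc]; exact Nat.mul_div_cancel _ (by norm_num)
      rw [e1, e2] at hrec'
      push_cast at hrec'
      rw [hlogb (k+1)] at hrec'
      push_cast at hrec'
      have hq0 : (0:ℝ) ≤ 20 * (2:ℝ)^(i+1) / (4*(3:ℝ)^(k+1)) := by positivity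
      push_cast
      ring_nf at hrec' hIH hq0 ⊢
      linarith [hrec', hIH, hq0]
  rintro n p ⟨i, rfl⟩ ⟨k, rfl⟩ hp2 hpn
  have h := key1 k i hpn
  push_cast
  rw [hrpow k]
  have hZ : (0:ℝ) < (2:ℝ)^k := by positivity
  have hX : (0:ℝ) < (2:ℝ)^i := by positivity
  have hT : (4:ℝ) * ((3:ℝ)/2)^k ≤ (2:ℝ)^i / (2:ℝ)^k := by
    have hc4 : ((4:ℝ) * 3^k) ≤ (2:ℝ)^i := by exact_mod_cast Nat.cast_le.mpr hpn
    calc (4:ℝ) * ((3:ℝ)/2)^k = (4 * 3^k) / 2^k := by rw [div_pow]; ring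
    _ ≤ (2:ℝ)^i / 2^k := by gcongr
  have h1 : 72 * ((2:ℝ)^i / (2:ℝ)^k) ≤ 174 * (2:ℝ)^i / ((4:ℝ) ^ Real.logb 3 2 * 2^k) := by
    have e : (174:ℝ) * (2:ℝ)^i / ((4:ℝ) ^ Real.logb 3 2 * 2^k)
        = (174 / (4:ℝ) ^ Real.logb 3 2) * ((2:ℝ)^i / 2^k) := by
      field_simp
    have h72 : (72:ℝ) ≤ 174 / (4:ℝ) ^ Real.logb 3 2 := by
      rw [le_div_iff₀ hA0]; linarith
    have hpos : (0:ℝ) ≤ (2:ℝ)^i / 2^k := by positivity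
    rw [e]
    exact mul_le_mul_of_nonneg_right h72 hpos
  have h2 : (88/5)*(k:ℝ)^2 + (352/5)*(k:ℝ) + 176 ≤ 47 * ((2:ℝ)^i / (2:ℝ)^k) := by
    nlinarith [hgeom k, hT]
  have hck : 11 * (Real.logb 2 3 * ((k:ℝ) * ((k:ℝ)+1))) ≤ (88/5)*(k:ℝ)^2 + (88/5)*(k:ℝ) := by
    have hk0 : (0:ℝ) ≤ (k:ℝ) * ((k:ℝ)+1) := by positivity
    nlinarith [mul_le_mul_of_nonneg_right hc' hk0]
  have h5 : (0:ℝ) ≤ 60 * (2:ℝ)^i / (4*(3:ℝ)^k) := by positivity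
  have hk : (0:ℝ) ≤ (k:ℝ) := Nat.cast_nonneg k
  ring_nf at h h1 h2 hck h5 ⊢
  linarith [h, h1, h2, hck, h5, hk]
end

section
/- Let T : ℕ → ℝ satisfy T(n) ≤ 3·T(n/2) + 38·n/p + 16·log₂ p for all powers of two n > n₀, with T(n₀) ≤ 173·n₀^{log₂ 3}/p, where n₀ = M·p^{log₃ 2}/20. If n ≥ p ≥ 2 and M ≥ log₂ p, then T(n) ≤ 675·n^{log₂ 3}/p. -/
set_option maxHeartbeats 2000000 in
/-- COPK main-mode computation time. -/
theorem stmt_15 (T : ℕ → ℝ) (p n₀ n : ℕ) (M : ℝ) (hM : 0 < M)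
    (hpform : ∃ k, p = 4 * 3 ^ k)
    (hn₀def : (n₀ : ℝ) = M * (p : ℝ) ^ (Real.logb 3 2) / 20)
    (hn₀pow : ∃ k, n₀ = 2 ^ k) (hnpow : ∃ k, n = 2 ^ k) (hdiv : ∃ k, n = n₀ * 2 ^ k)
    (hrec : ∀ m : ℕ, (∃ k, m = 2 ^ k) → n₀ < m →
      T m ≤ 3 * T (m / 2) + 38 * (m : ℝ) / p + 16 * Real.logb 2 p)
    (hbase : T n₀ ≤ 173 * (n₀ : ℝ) ^ (Real.logb 2 3) / p)
    (hp : 2 ≤ p) (hpn : p ≤ n) (hMlog : Real.logb 2 p ≤ M) :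
    T n ≤ 675 * (n : ℝ) ^ (Real.logb 2 3) / p := by
  obtain ⟨a, hn₀a⟩ := hn₀pow
  obtain ⟨K, hK⟩ := hdiv
  set c : ℝ := Real.logb 2 3 with hc
  set L : ℝ := Real.logb 2 (p : ℝ) with hL
  have hp0 : (0:ℝ) < p := by positivity
  have hp2 : (2:ℝ) ≤ p := by exact_mod_cast hp
  have hc1 : (1:ℝ) ≤ c := by
    rw [hc, show (1:ℝ) = Real.logb 2 2 from (Real.logb_self_eq_one (by norm_num)).symm]
    exact Real.logb_le_logb_of_le (by norm_num) (by norm_num) (by norm_num)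
  have hc85 : c ≤ 8/5 := by
    rw [hc, Real.logb_le_iff_le_rpow (by norm_num) (by norm_num)]
    have h5 : ((2:ℝ) ^ ((8:ℝ)/5)) ^ (5:ℕ) = 2 ^ (8:ℕ) := by
      rw [← Real.rpow_natCast ((2:ℝ)^((8:ℝ)/5)) 5, ← Real.rpow_mul (by norm_num)]
      norm_num
    have hnn := Real.rpow_nonneg (show (0:ℝ) ≤ 2 by norm_num) ((8:ℝ)/5)
    apply le_of_pow_le_pow_left₀ (n := 5) (by norm_num) hnn
    rw [h5]; norm_num
  have h2c : (2:ℝ) ^ c = 3 := Real.rpow_logb (by norm_num) (by norm_num) (by norm_num)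
  have hL1 : (1:ℝ) ≤ L := by
    rw [hL, show (1:ℝ) = Real.logb 2 2 from (Real.logb_self_eq_one (by norm_num)).symm]
    exact Real.logb_le_logb_of_le (by norm_num) (by norm_num) hp2
  have hn₀posN : 0 < n₀ := by rw [hn₀a]; positivity
  have hn₀1 : (1:ℝ) ≤ (n₀:ℝ) := by exact_mod_cast hn₀posN
  have hA0 : (0:ℝ) < M / 20 := by linarith
  -- the key identity n₀^c = (M/20)^c * p
  have hlc : Real.logb 3 2 * c = 1 := by
    rw [hc]
    unfold Real.logb
    have h2 : Real.log 2 ≠ 0 := ne_of_gt (Real.log_pos (by norm_num))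
    have h3 : Real.log 3 ≠ 0 := ne_of_gt (Real.log_pos (by norm_num))
    field_simp
  have hid : (n₀:ℝ) ^ c = (M/20) ^ c * p := by
    have e : (n₀:ℝ) = (M/20) * (p:ℝ) ^ (Real.logb 3 2) := by rw [hn₀def]; ring
    rw [e, Real.mul_rpow hA0.le (Real.rpow_nonneg hp0.le _), ← Real.rpow_mul hp0.le,
      hlc, Real.rpow_one]
  -- KEY INEQUALITY: 8 L ≤ 426 (M/20)^c
  have key : 8 * L ≤ 426 * (M/20) ^ c := by
    have hLA : L ≤ 20 * (M/20) := by linarith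
    rcases le_or_gt 1 (M/20) with hA1 | hA1
    · -- M/20 ≥ 1
      have h1 : M/20 ≤ (M/20) ^ c := by
        calc M/20 = (M/20) ^ (1:ℝ) := (Real.rpow_one _).symm
        _ ≤ (M/20) ^ c := Real.rpow_le_rpow_of_exponent_le hA1 hc1
      nlinarith
    · obtain ⟨k, hpk⟩ := hpform
      rcases le_or_gt k 1 with hk | hk
      · -- p ≤ 12 : use (M/20)^c = n₀^c / p ≥ 1/p, and L ≤ 4
        have hp12 : (p:ℝ) ≤ 12 := by
          interval_cases k <;> simp [hpk] <;> norm_num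
        have hL4 : L ≤ 4 := by
          rw [hL, show (4:ℝ) = Real.logb 2 16 by
            rw [show (16:ℝ) = 2^(4:ℕ) by norm_num, Real.logb_pow,
              Real.logb_self_eq_one (by norm_num)]; norm_num]
          exact Real.logb_le_logb_of_le (by norm_num) hp0 (by linarith)
        have h1 : (1:ℝ) ≤ (n₀:ℝ) ^ c := Real.one_le_rpow hn₀1 (by linarith)
        rw [hid] at h1
        -- h1 : 1 ≤ (M/20)^c * p
        have hAc : (0:ℝ) ≤ (M/20)^c := Real.rpow_nonneg hA0.le _
        nlinarith
      · -- p ≥ 36, L ≥ 5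
        have hp36 : (36:ℝ) ≤ p := by
          have : 4 * 3^2 ≤ p := by
            rw [hpk]
            have := Nat.pow_le_pow_right (show 1 ≤ 3 by norm_num) hk
            omega
          exact_mod_cast by omega
        have hL5 : (5:ℝ) ≤ L := by
          rw [hL, show (5:ℝ) = Real.logb 2 32 by
            rw [show (32:ℝ) = 2^(5:ℕ) by norm_num, Real.logb_pow,
              Real.logb_self_eq_one (by norm_num)]; norm_num]
          exact Real.logb_le_logb_of_le (by norm_num) (by norm_num) (by linarith)
        have hx0 : (0:ℝ) < L/20 := by linarith
        have hxA : L/20 ≤ M/20 := by linarith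
        have h85c : (M/20) ^ ((8:ℝ)/5) ≤ (M/20) ^ c :=
          Real.rpow_le_rpow_of_exponent_ge hA0 hA1.le hc85
        have hmono : (L/20) ^ ((8:ℝ)/5) ≤ (M/20) ^ ((8:ℝ)/5) :=
          Real.rpow_le_rpow hx0.le hxA (by norm_num)
        have hsplit : (L/20) ^ ((8:ℝ)/5) = (L/20) * (L/20) ^ ((3:ℝ)/5) := by
          rw [show (8:ℝ)/5 = 1 + 3/5 by norm_num, Real.rpow_add hx0, Real.rpow_one]
        have h35 : (160:ℝ)/426 ≤ (L/20) ^ ((3:ℝ)/5) := by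
          have h14 : ((1:ℝ)/4) ^ ((3:ℝ)/5) ≤ (L/20) ^ ((3:ℝ)/5) :=
            Real.rpow_le_rpow (by norm_num) (by linarith) (by norm_num)
          have hbb : (160:ℝ)/426 ≤ (1/4) ^ ((3:ℝ)/5) := by
            have h5 : (((1:ℝ)/4) ^ ((3:ℝ)/5)) ^ (5:ℕ) = (1/4 : ℝ) ^ (3:ℕ) := by
              rw [← Real.rpow_natCast (((1:ℝ)/4)^((3:ℝ)/5)) 5, ← Real.rpow_mul (by norm_num)]
              norm_num
            have hnn := Real.rpow_nonneg (show (0:ℝ) ≤ 1/4 by norm_num) ((3:ℝ)/5)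
            apply le_of_pow_le_pow_left₀ (n := 5) (by norm_num) hnn
            rw [h5]; norm_num
          linarith
        -- conclude: 8 L ≤ 426 (L/20)^{8/5} ≤ 426 (M/20)^c
        have hfin : 8 * L ≤ 426 * (L/20) ^ ((8:ℝ)/5) := by
          rw [hsplit]
          nlinarith [mul_le_mul_of_nonneg_left h35 hx0.le]
        linarith
    -- end key
  -- strengthened base case (multiplied through by p)
  have hbase2 : T n₀ * p ≤ 675 * (n₀:ℝ) ^ c - 76 * (n₀:ℝ) - 8 * L * p := by
    have h1 : T n₀ * p ≤ 173 * (n₀:ℝ) ^ c := (le_div_iff₀ hp0).mp hbase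
    have h2 : (n₀:ℝ) ≤ (n₀:ℝ) ^ c := by
      calc (n₀:ℝ) = (n₀:ℝ) ^ (1:ℝ) := (Real.rpow_one _).symm
      _ ≤ (n₀:ℝ) ^ c := Real.rpow_le_rpow_of_exponent_le hn₀1 hc1
    have h3 : 8 * L * p ≤ 426 * (n₀:ℝ) ^ c := by
      rw [hid]; nlinarith
    linarith
  -- induction along the chain
  have main : ∀ j : ℕ, T (n₀ * 2 ^ j) * p ≤
      675 * ((n₀ * 2 ^ j : ℕ) : ℝ) ^ c - 76 * ((n₀ * 2 ^ j : ℕ) : ℝ) - 8 * L * p := by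
    intro j
    induction j with
    | zero => simpa using hbase2
    | succ j ih =>
      have hmpow : ∃ k, n₀ * 2 ^ (j+1) = 2 ^ k := ⟨a + (j+1), by rw [hn₀a, ← pow_add]⟩
      have hlt : n₀ < n₀ * 2 ^ (j+1) := by
        have h2 : 1 < 2 ^ (j+1) := Nat.one_lt_two_pow (Nat.succ_ne_zero j)
        exact (lt_mul_iff_one_lt_right hn₀posN).mpr h2
      have hdiv2 : n₀ * 2 ^ (j+1) / 2 = n₀ * 2 ^ j := by
        rw [pow_succ, ← mul_assoc, Nat.mul_div_cancel _ (by norm_num)]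
      have h1 := hrec _ hmpow hlt
      rw [hdiv2] at h1
      have hcast : ((n₀ * 2 ^ (j+1) : ℕ) : ℝ) = 2 * ((n₀ * 2 ^ j : ℕ) : ℝ) := by
        push_cast; ring
      have hrp : ((n₀ * 2 ^ (j+1) : ℕ) : ℝ) ^ c = 3 * ((n₀ * 2 ^ j : ℕ) : ℝ) ^ c := by
        rw [hcast, Real.mul_rpow (by norm_num) (Nat.cast_nonneg _), h2c]
      have h1p := mul_le_mul_of_nonneg_right h1 hp0.le
      rw [add_mul, add_mul, div_mul_cancel₀ _ hp0.ne'] at h1p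
      rw [hrp, hcast]
      rw [hcast] at h1p
      linarith
  have hfinal := main K
  rw [← hK] at hfinal
  rw [le_div_iff₀ hp0]
  have hn0 : (0:ℝ) ≤ (n:ℝ) := Nat.cast_nonneg n
  have h8 : (0:ℝ) ≤ 8 * L * p := mul_nonneg (mul_nonneg (by norm_num) (by linarith)) hp0.le
  linarith
end
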